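/- arXiv:2404.05565 — 2 statements merged into one kernel-verified Lean document; each statement's English description precedes it below -/
import Mathlib

section
/- If f is a unimodular function on the unit circle (|f| = 1 a.e.) with inf_{z∈D} |Pf(z)| = 0, then ∥f∥_G = 1; in particular f is G-extremal, meaning ∥f∥_G = ∥f∥_∞. -/
open MeasureTheory Complex Real Filter Topology
open scoped ENNReal

/-- Normalized arc-length measure on the circle, parametrized by angle θ ∈ (0, 2π]. -/
noncomputable def circleM : Measure ℝ :=
  (ENNReal.ofReal (2 * Real.pi))⁻¹ • (volume.restrict (Set.Ioc 0 (2 * Real.pi)))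

/-- Poisson kernel (density of harmonic measure ω_z w.r.t. circleM) at the boundary
point with angle θ. -/
noncomputable def pk (z : ℂ) (θ : ℝ) : ℝ :=
  (1 - ‖z‖ ^ 2) / ‖Complex.exp (θ * Complex.I) - z‖ ^ 2

/-- Poisson integral of a complex boundary function. -/
noncomputable def poissonInt (f : ℝ → ℂ) (z : ℂ) : ℂ :=
  ∫ θ, (pk z θ : ℂ) * f θ ∂circleM

/-- Poisson integral of a real boundary function. -/
noncomputable def poissonIntR (u : ℝ → ℝ) (z : ℂ) : ℝ :=
  ∫ θ, pk z θ * u θ ∂circleM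

/-- Φ_f(z) = P(|f|²)(z) - |Pf(z)|². -/
noncomputable def Phi (f : ℝ → ℂ) (z : ℂ) : ℝ :=
  (∫ θ, pk z θ * ‖f θ‖ ^ 2 ∂circleM) - ‖poissonInt f z‖ ^ 2

/-- The open unit disk. -/
def unitDisk : Set ℂ := Metric.ball 0 1

/-- The Garsia norm ‖f‖_G = sup_{z ∈ 𝔻} Φ_f(z)^{1/2}, valued in ℝ≥0∞. -/
noncomputable def garsiaNorm (f : ℝ → ℂ) : ℝ≥0∞ :=
  ⨆ z : unitDisk, ENNReal.ofReal (Real.sqrt (Phi f (z : ℂ)))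

/-! ### Auxiliary lemmas -/

instance circleM_prob : IsProbabilityMeasure circleM := by
  constructor
  rw [circleM, Measure.smul_apply, Measure.restrict_apply MeasurableSet.univ,
    Set.univ_inter, Real.volume_Ioc, sub_zero, smul_eq_mul]
  exact ENNReal.inv_mul_cancel (by simp [Real.pi_pos, Real.two_pi_pos]
    ) ENNReal.ofReal_ne_top

lemma circleM_ne_zero : circleM ≠ 0 := by
  intro h
  have := measure_univ (μ := circleM)
  rw [h] at this
  simp at this

/-- The pointwise partial-fraction identity for the Poisson kernel. -/
lemma pk_eq_pointwise (z : ℂ) (hz : ‖z‖ < 1) (θ : ℝ) :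
    (pk z θ : ℂ) = deriv (circleMap 0 1) θ •
      ((-Complex.I * (circleMap 0 1 θ - z)⁻¹) +
        ((-Complex.I * starRingEnd ℂ z) * (1 - starRingEnd ℂ z * (circleMap 0 1 θ))⁻¹)) := by
  rw [deriv_circleMap]
  set w : ℂ := circleMap 0 1 θ with hwdef
  have hw1 : ‖w‖ = 1 := by simp [hwdef, circleMap]
  have hw0 : w ≠ 0 := by intro h; rw [h] at hw1; simp at hw1
  have hwz : w - z ≠ 0 := by
    intro h; rw [sub_eq_zero] at h; rw [h] at hw1; rw [hw1] at hz; exact lt_irrefl 1 hz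
  have hcz : 1 - (starRingEnd ℂ z) * w ≠ 0 := by
    intro h; rw [sub_eq_zero] at h
    have : ‖(starRingEnd ℂ z) * w‖ = 1 := by rw [← h]; simp
    rw [norm_mul, Complex.norm_conj, hw1, mul_one] at this
    rw [this] at hz; exact lt_irrefl 1 hz
  have hwconj : w * (starRingEnd ℂ w) = 1 := by
    rw [Complex.mul_conj]; norm_cast; rw [← Complex.sq_norm, hw1]; norm_num
  have hpk : (pk z θ : ℂ) = (1 - z * (starRingEnd ℂ z)) / ((w - z) * (starRingEnd ℂ (w - z))) := by
    have h1 : ∀ u : ℂ, ((‖u‖ : ℂ)) ^ 2 = u * starRingEnd ℂ u := fun u => by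
      rw [← Complex.ofReal_pow, Complex.sq_norm, Complex.mul_conj]
    rw [pk]
    push_cast
    rw [h1, h1]
    congr 3 <;> simp [hwdef, circleMap]
  have hconjw : starRingEnd ℂ w = w⁻¹ :=
    eq_inv_of_mul_eq_one_left (by rw [mul_comm]; exact hwconj)
  have hwzc : w⁻¹ - starRingEnd ℂ z ≠ 0 := by
    intro h
    apply hcz
    have := congrArg (fun u => u * w) h
    simp only [sub_mul, zero_mul, inv_mul_cancel₀ hw0] at this
    rw [← this]
  rw [smul_eq_mul]
  have hre : (-Complex.I * (w - z)⁻¹) + ((-Complex.I * starRingEnd ℂ z) * (1 - starRingEnd ℂ z * w)⁻¹)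
      = -Complex.I * ((w - z)⁻¹ + starRingEnd ℂ z * (1 - starRingEnd ℂ z * w)⁻¹) := by ring
  rw [hre]
  set A := (w - z)⁻¹ + starRingEnd ℂ z * (1 - starRingEnd ℂ z * w)⁻¹ with hA
  have key : w * Complex.I * (-Complex.I * A) = w * A := by
    rw [show w * Complex.I * (-Complex.I * A) = -(Complex.I * Complex.I) * (w * A) from by ring,
      Complex.I_mul_I]; ring
  have hsplit : w⁻¹ - starRingEnd ℂ z = (1 - starRingEnd ℂ z * w) / w := by
    field_simp
  rw [key, hpk, map_sub, hconjw, hA, hsplit]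
  field_simp
  ring

/-- The interval integral of the complexified Poisson kernel over `[0, 2π]` equals `2π`. -/
lemma integral_pk_complex (z : ℂ) (hz : ‖z‖ < 1) :
    ∫ θ in (0:ℝ)..(2 * Real.pi), (pk z θ : ℂ) = 2 * Real.pi := by
  have hne : ∀ w : ℂ, w ∈ Metric.closedBall (0:ℂ) 1 → 1 - (starRingEnd ℂ z) * w ≠ 0 := by
    intro w hw
    have habs : ‖(starRingEnd ℂ z) * w‖ < 1 := by
      rw [norm_mul, Complex.norm_conj]
      calc ‖z‖ * ‖w‖ ≤ ‖z‖ * 1 := by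
            apply mul_le_mul_of_nonneg_left _ (norm_nonneg z)
            simpa [Complex.dist_eq] using hw
        _ < 1 := by simpa using hz
    intro h
    rw [sub_eq_zero] at h
    rw [← h] at habs
    simp at habs
  -- the two circle integrals
  have hI1 : (∮ w in C((0:ℂ), 1), -Complex.I * (w - z)⁻¹) = 2 * Real.pi := by
    rw [circleIntegral.integral_const_mul,
      circleIntegral.integral_sub_inv_of_mem_ball (by simpa using hz)]
    rw [show (-Complex.I) * (2 * Real.pi * Complex.I)
        = -(Complex.I * Complex.I) * (2 * Real.pi) from by ring, Complex.I_mul_I]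
    ring
  have hI2 : (∮ w in C((0:ℂ), 1),
      (-Complex.I * starRingEnd ℂ z) * (1 - starRingEnd ℂ z * w)⁻¹) = 0 := by
    refine circleIntegral_eq_zero_of_differentiable_on_off_countable zero_le_one
      Set.countable_empty ?_ ?_
    · exact continuousOn_const.mul ((continuousOn_const.sub
        (continuousOn_const.mul continuousOn_id)).inv₀ hne)
    · intro w hw
      have hw' : 1 - (starRingEnd ℂ z) * w ≠ 0 := hne w (Metric.ball_subset_closedBall hw.1)
      exact (differentiableAt_const _).mul
        (((differentiableAt_const _).sub
          ((differentiableAt_const _).mul differentiableAt_id)).inv hw')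
  -- continuity of the two integrands in θ
  have hc1 : Continuous fun θ : ℝ =>
      deriv (circleMap 0 1) θ • (-Complex.I * (circleMap 0 1 θ - z)⁻¹) := by
    simp only [deriv_circleMap]
    refine (((continuous_circleMap 0 1).mul continuous_const).mul
      (continuous_const.mul ?_))
    refine ((continuous_circleMap 0 1).sub continuous_const).inv₀ ?_
    intro θ
    intro h
    rw [Pi.sub_apply, sub_eq_zero] at h
    have : ‖circleMap 0 1 θ‖ = 1 := by simp [circleMap]
    rw [h] at this
    rw [this] at hz; exact lt_irrefl 1 hz
  have hc2 : Continuous fun θ : ℝ =>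
      deriv (circleMap 0 1) θ •
        ((-Complex.I * starRingEnd ℂ z) * (1 - starRingEnd ℂ z * circleMap 0 1 θ)⁻¹) := by
    simp only [deriv_circleMap]
    refine (((continuous_circleMap 0 1).mul continuous_const).mul
      (continuous_const.mul ?_))
    refine (continuous_const.sub (continuous_const.mul (continuous_circleMap 0 1))).inv₀ ?_
    intro θ
    exact hne _ (by simp [circleMap, Metric.mem_closedBall, Complex.dist_eq])
  calc ∫ θ in (0:ℝ)..(2 * Real.pi), (pk z θ : ℂ)
      = ∫ θ in (0:ℝ)..(2 * Real.pi),
          (deriv (circleMap 0 1) θ • (-Complex.I * (circleMap 0 1 θ - z)⁻¹)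
          + deriv (circleMap 0 1) θ •
            ((-Complex.I * starRingEnd ℂ z) * (1 - starRingEnd ℂ z * circleMap 0 1 θ)⁻¹)) := by
        refine intervalIntegral.integral_congr fun θ _ => ?_
        rw [pk_eq_pointwise z hz θ, smul_add]
    _ = (∮ w in C((0:ℂ), 1), -Complex.I * (w - z)⁻¹)
        + ∮ w in C((0:ℂ), 1), (-Complex.I * starRingEnd ℂ z) * (1 - starRingEnd ℂ z * w)⁻¹ := by
        rw [intervalIntegral.integral_add (hc1.intervalIntegrable _ _)
          (hc2.intervalIntegrable _ _)]
        rfl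
    _ = 2 * Real.pi := by rw [hI1, hI2, add_zero]

/-- The Poisson kernel integrates to 1 over the normalized circle measure. -/
lemma integral_pk (z : ℂ) (hz : ‖z‖ < 1) :
    ∫ θ, pk z θ ∂circleM = 1 := by
  have hR : ∫ θ in (0:ℝ)..(2 * Real.pi), pk z θ = 2 * Real.pi := by
    have h := intervalIntegral.integral_ofReal (a := (0:ℝ)) (b := 2 * Real.pi)
      (μ := volume) (f := pk z)
    rw [integral_pk_complex z hz] at h
    exact_mod_cast h.symm
  rw [circleM, integral_smul_measure,
    ← intervalIntegral.integral_of_le Real.two_pi_pos.le, hR, smul_eq_mul,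
    ENNReal.toReal_inv, ENNReal.toReal_ofReal Real.two_pi_pos.le]
  exact inv_mul_cancel₀ Real.two_pi_pos.ne'

lemma Phi_eq (f : ℝ → ℂ) (hmod : ∀ᵐ θ ∂circleM, ‖f θ‖ = 1)
    (z : ℂ) (hz : ‖z‖ < 1) :
    Phi f z = 1 - ‖poissonInt f z‖ ^ 2 := by
  unfold Phi
  congr 1
  have hcongr : (fun θ => pk z θ * ‖f θ‖ ^ 2) =ᵐ[circleM] fun θ => pk z θ :=
    hmod.mono fun θ h => by simp only []; rw [h]; ring
  rw [integral_congr_ae hcongr, integral_pk z hz]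

/-- If f is unimodular on 𝕋 and inf_{z∈𝔻} |Pf(z)| = 0, then
‖f‖_G = 1; in particular, f is G-extremal: ‖f‖_G = ‖f‖_∞. -/
theorem unimodular_G_extremal (f : ℝ → ℂ) (hf : MemLp f ⊤ circleM)
    (hmod : ∀ᵐ θ ∂circleM, ‖f θ‖ = 1)
    (hinf : ∀ ε > (0 : ℝ), ∃ z ∈ unitDisk, ‖poissonInt f z‖ < ε) :
    garsiaNorm f = 1 ∧ garsiaNorm f = eLpNorm f ⊤ circleM := by
  have habs : ∀ z : ℂ, z ∈ unitDisk → ‖z‖ < 1 := by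
    intro z hz
    simpa [unitDisk, Metric.mem_ball, Complex.dist_eq] using hz
  have hupper : garsiaNorm f ≤ 1 := by
    refine iSup_le ?_
    rintro ⟨z, hz⟩
    have hPhi : Phi f z ≤ 1 := by
      rw [Phi_eq f hmod z (habs z hz)]
      have := sq_nonneg (‖poissonInt f z‖)
      linarith
    have : Real.sqrt (Phi f z) ≤ 1 := by
      calc Real.sqrt (Phi f z) ≤ Real.sqrt 1 := Real.sqrt_le_sqrt hPhi
        _ = 1 := Real.sqrt_one
    simpa using ENNReal.ofReal_le_ofReal this
  have hlower : (1 : ℝ≥0∞) ≤ garsiaNorm f := by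
    refine le_of_forall_lt fun c hc => ?_
    have hct : c ≠ ⊤ := ne_top_of_lt hc
    have ht1 : c.toReal < 1 := ENNReal.toReal_lt_of_lt_ofReal (by rwa [ENNReal.ofReal_one])
    set t := c.toReal with htdef
    have ht0 : 0 ≤ t := ENNReal.toReal_nonneg
    set d : ℝ := (t + 1) / 2 with hddef
    have hd0 : 0 < d := by rw [hddef]; linarith
    have hd1 : d < 1 := by rw [hddef]; linarith
    have htd : t < d := by rw [hddef]; linarith
    have hd2 : 0 < 1 - d ^ 2 := by nlinarith
    set ε : ℝ := Real.sqrt (1 - d ^ 2) with hεdef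
    have hε : 0 < ε := Real.sqrt_pos.mpr hd2
    obtain ⟨z, hzD, hzlt⟩ := hinf ε hε
    have hPhi : Phi f z = 1 - ‖poissonInt f z‖ ^ 2 :=
      Phi_eq f hmod z (habs z hzD)
    have hsq : ‖poissonInt f z‖ ^ 2 < 1 - d ^ 2 := by
      have := pow_lt_pow_left₀ hzlt (norm_nonneg _) (n := 2) two_ne_zero
      rwa [hεdef, Real.sq_sqrt hd2.le] at this
    have hPhid : d ^ 2 < Phi f z := by rw [hPhi]; linarith
    have hsqrt : d ≤ Real.sqrt (Phi f z) := by
      calc d = Real.sqrt (d ^ 2) := (Real.sqrt_sq hd0.le).symm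
        _ ≤ Real.sqrt (Phi f z) := Real.sqrt_le_sqrt hPhid.le
    have htsqrt : t < Real.sqrt (Phi f z) := lt_of_lt_of_le htd hsqrt
    calc c = ENNReal.ofReal t := (ENNReal.ofReal_toReal hct).symm
      _ < ENNReal.ofReal (Real.sqrt (Phi f z)) := by
          rw [ENNReal.ofReal_lt_ofReal_iff (lt_of_le_of_lt ht0 htsqrt)]
          exact htsqrt
      _ ≤ garsiaNorm f :=
          le_iSup (fun z : unitDisk => ENNReal.ofReal (Real.sqrt (Phi f (z : ℂ)))) ⟨z, hzD⟩
  have h1 : garsiaNorm f = 1 := le_antisymm hupper hlower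
  have h2 : eLpNorm f ⊤ circleM = 1 := by
    rw [eLpNorm_exponent_top, eLpNormEssSup]
    have hcongr : (fun θ => ‖f θ‖ₑ) =ᵐ[circleM] fun _ => (1 : ℝ≥0∞) :=
      hmod.mono fun θ h => by
        simp only []
        rw [← ofReal_norm, h, ENNReal.ofReal_one]
    rw [essSup_congr_ae hcongr, essSup_const _ circleM_ne_zero]
  exact ⟨h1, h1.trans h2.symm⟩
end

section
/- Every norm-attaining BMO function of Garsia norm one is an extreme point of the unit ball of BMO (modulo constants): if f ∈ BMO_na with ∥f∥_G = 1, and g ∈ BMO satisfies ∥f+g∥_G ≤ 1 and ∥f-g∥_G ≤ 1, then g is constant. -/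
open MeasureTheory Complex Real Filter Topology
open scoped ENNReal

lemma abs_exp_theta (θ : ℝ) : ‖Complex.exp (θ * Complex.I)‖ = 1 :=
  Complex.norm_exp_ofReal_mul_I θ

lemma sub_lb {z : ℂ} (hz : ‖z‖ < 1) (θ : ℝ) :
    1 - ‖z‖ ≤ ‖Complex.exp (θ * Complex.I) - z‖ := by
  have := norm_sub_norm_le (Complex.exp (θ * Complex.I)) z
  simpa [abs_exp_theta] using this

lemma exp_sub_ne {z : ℂ} (hz : ‖z‖ < 1) (θ : ℝ) :
    Complex.exp (θ * Complex.I) - z ≠ 0 := by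
  intro h
  have h2 := sub_lb hz θ
  rw [h] at h2
  simp at h2
  linarith

lemma abs_sub_pos' {z : ℂ} (hz : ‖z‖ < 1) (θ : ℝ) :
    0 < ‖Complex.exp (θ * Complex.I) - z‖ :=
  lt_of_lt_of_le (by linarith) (sub_lb hz θ)

lemma pk_pos {z : ℂ} (hz : ‖z‖ < 1) (θ : ℝ) : 0 < pk z θ := by
  have h1 : 0 ≤ ‖z‖ := norm_nonneg z
  apply div_pos (by nlinarith) (pow_pos (abs_sub_pos' hz θ) 2)

lemma pk_le {z : ℂ} (hz : ‖z‖ < 1) (θ : ℝ) :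
    pk z θ ≤ (1 - ‖z‖ ^ 2) / (1 - ‖z‖) ^ 2 := by
  have h1 : 0 ≤ ‖z‖ := norm_nonneg z
  have h2 := sub_lb hz θ
  apply div_le_div_of_nonneg_left (by nlinarith) (by nlinarith) (by nlinarith)

lemma continuous_pk (z : ℂ) (hz : ‖z‖ < 1) : Continuous (pk z) := by
  apply Continuous.div continuous_const
  · exact ((continuous_norm.comp ((Complex.continuous_exp.comp (by fun_prop)).sub continuous_const)).pow 2)
  · intro θ
    exact pow_ne_zero 2 (ne_of_gt (abs_sub_pos' hz θ))

instance : IsFiniteMeasure circleM := by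
  constructor
  rw [circleM]
  simp [Measure.restrict_apply]
  rw [ENNReal.inv_mul_cancel] <;> simp [Real.pi_pos, Real.pi_ne_zero, ENNReal.mul_eq_top]

lemma integrable_pk_mul {z : ℂ} (hz : ‖z‖ < 1) {f : ℝ → ℂ}
    (hf : Integrable f circleM) :
    Integrable (fun θ => (pk z θ : ℂ) * f θ) circleM := by
  apply hf.bdd_mul (c := (1 - ‖z‖ ^ 2) / (1 - ‖z‖) ^ 2)
  · exact (Complex.continuous_ofReal.comp (continuous_pk z hz)).aestronglyMeasurable
  · refine Filter.Eventually.of_forall fun θ => ?_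
    rw [Complex.norm_real, Real.norm_eq_abs, _root_.abs_of_nonneg (pk_pos hz θ).le]
    exact pk_le hz θ

lemma integrable_pk_mulR {z : ℂ} (hz : ‖z‖ < 1) {u : ℝ → ℝ}
    (hu : Integrable u circleM) :
    Integrable (fun θ => pk z θ * u θ) circleM := by
  apply hu.bdd_mul (c := (1 - ‖z‖ ^ 2) / (1 - ‖z‖) ^ 2) (continuous_pk z hz).aestronglyMeasurable
  refine Filter.Eventually.of_forall fun θ => ?_
  rw [Real.norm_eq_abs, _root_.abs_of_nonneg (pk_pos hz θ).le]
  exact pk_le hz θ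

lemma integrable_of_L2 {f : ℝ → ℂ} (hf : MemLp f 2 circleM) : Integrable f circleM :=
  hf.integrable one_le_two

lemma integrable_abs_sq {f : ℝ → ℂ} (hf : MemLp f 2 circleM) :
    Integrable (fun θ => ‖f θ‖ ^ 2) circleM := by
  have h := hf.integrable_norm_rpow (by norm_num) (by norm_num)
  simp only [ENNReal.toReal_ofNat] at h
  refine h.congr (Filter.Eventually.of_forall fun θ => ?_)
  simp [Real.rpow_natCast]

lemma abs_exp_neg_nat (n : ℕ) (θ : ℝ) :
    ‖Complex.exp (-(n : ℂ) * θ * Complex.I)‖ = 1 := by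
  rw [Complex.norm_exp]
  norm_num [Complex.mul_re]

lemma integral_exp_neg_nat {n : ℕ} (hn : n ≠ 0) :
    ∫ θ in Set.Ioc (0:ℝ) (2*π), Complex.exp (-(n:ℂ) * θ * Complex.I) = 0 := by
  rw [← intervalIntegral.integral_of_le (by positivity)]
  have hc : (-(n:ℂ) * Complex.I) ≠ 0 := by
    simp [Complex.I_ne_zero, hn]
  have h := integral_exp_mul_complex (a := (0:ℝ)) (b := 2*π) hc
  simp_rw [show ∀ θ:ℝ, -(n:ℂ) * θ * Complex.I = (-(n:ℂ) * Complex.I) * θ from fun θ => by ring]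
  rw [h]
  have h1 : -(n:ℂ) * Complex.I * ((2*π : ℝ) : ℂ) = ((-n : ℤ) : ℂ) * (2 * π * Complex.I) := by
    push_cast; ring
  rw [h1, Complex.exp_int_mul_two_pi_mul_I]
  simp

lemma integral_inv_one_sub {z : ℂ} (hz : ‖z‖ < 1) :
    ∫ θ in Set.Ioc (0:ℝ) (2*π), (1 - z * Complex.exp (-(θ:ℂ) * Complex.I))⁻¹
      = 2 * π := by
  have key : ∀ θ : ℝ, (1 - z * Complex.exp (-(θ:ℂ) * Complex.I))⁻¹
      = ∑' n : ℕ, z ^ n * Complex.exp (-(n:ℂ) * θ * Complex.I) := by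
    intro θ
    rw [← tsum_geometric_of_norm_lt_one (ξ := z * Complex.exp (-(θ:ℂ) * Complex.I))]
    · congr 1; ext n
      rw [mul_pow, ← Complex.exp_nat_mul]
      congr 2; ring
    · rw [norm_mul]
      have : ‖Complex.exp (-(θ:ℂ) * Complex.I)‖ = 1 := by
        rw [Complex.norm_exp]; norm_num [Complex.mul_re]
      rw [this, mul_one]; exact hz
  simp_rw [key]
  rw [MeasureTheory.integral_tsum]
  · rw [tsum_eq_single 0]
    · simp [Real.pi_nonneg, Real.two_pi_pos.le, abs_of_nonneg]
    · intro n hn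
      rw [MeasureTheory.integral_const_mul, integral_exp_neg_nat hn, mul_zero]
  · intro n
    apply Continuous.aestronglyMeasurable
    fun_prop
  · have hb : ∀ n : ℕ, (∫⁻ θ in Set.Ioc (0:ℝ) (2*π),
        ‖z ^ n * Complex.exp (-(n:ℂ) * θ * Complex.I)‖ₑ)
        = (‖z‖₊ : ℝ≥0∞) ^ n * ENNReal.ofReal (2*π) := by
      intro n
      have : ∀ θ : ℝ, (‖z ^ n * Complex.exp (-(n:ℂ) * θ * Complex.I)‖ₑ : ℝ≥0∞)
          = (‖z‖₊ : ℝ≥0∞) ^ n := by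
        intro θ
        show ((‖z ^ n * Complex.exp (-(n:ℂ) * θ * Complex.I)‖₊ : NNReal) : ℝ≥0∞) = _
        have h1 : ‖z ^ n * Complex.exp (-(n:ℂ) * θ * Complex.I)‖ = ‖z‖ ^ n := by
          rw [norm_mul, norm_pow, abs_exp_neg_nat, mul_one]
        rw [← ENNReal.coe_pow]
        congr 1
        ext
        rw [coe_nnnorm, h1]
        simp
      simp_rw [this]
      rw [MeasureTheory.lintegral_const, Measure.restrict_apply MeasurableSet.univ,
        Set.univ_inter, Real.volume_Ioc]
      norm_num
    simp_rw [hb]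
    rw [ENNReal.tsum_mul_right]
    apply ENNReal.mul_ne_top
    · rw [ENNReal.tsum_geometric]
      rw [ENNReal.inv_ne_top]
      intro h
      rw [tsub_eq_zero_iff_le] at h
      have : (‖z‖₊ : ℝ≥0∞) < 1 := by
        rw [← ENNReal.coe_one, ENNReal.coe_lt_coe]
        rw [← NNReal.coe_lt_coe]
        simpa [coe_nnnorm] using hz
      exact absurd h (not_le.mpr this)
    · exact ENNReal.ofReal_ne_top

lemma one_sub_ne {z : ℂ} (hz : ‖z‖ < 1) (θ : ℝ) :
    1 - z * Complex.exp (-(θ:ℂ) * Complex.I) ≠ 0 := by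
  intro h
  have h1 : ‖z * Complex.exp (-(θ:ℂ) * Complex.I)‖ = ‖z‖ := by
    rw [norm_mul, Complex.norm_exp]
    norm_num [Complex.mul_re]
  have h2 : (1 : ℂ) = z * Complex.exp (-(θ:ℂ) * Complex.I) := by
    linear_combination h
  rw [← h2] at h1
  simp at h1
  rw [h1] at hz
  exact lt_irrefl _ hz

lemma pk_re {z : ℂ} (hz : ‖z‖ < 1) (θ : ℝ) :
    pk z θ = (2 * (1 - z * Complex.exp (-(θ:ℂ) * Complex.I))⁻¹ - 1).re := by
  set w := Complex.exp ((θ:ℂ) * Complex.I) with hw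
  have hwne : w ≠ 0 := Complex.exp_ne_zero _
  have hwz : w - z ≠ 0 := exp_sub_ne hz θ
  have habs : ‖w‖ = 1 := abs_exp_theta θ
  have hnegexp : Complex.exp (-(θ:ℂ) * Complex.I) = w⁻¹ := by
    rw [hw, ← Complex.exp_neg]
    ring_nf
  have hC : 2 * (1 - z * Complex.exp (-(θ:ℂ) * Complex.I))⁻¹ - 1 = (w + z) / (w - z) := by
    rw [hnegexp]
    have h1 : 1 - z * w⁻¹ = (w - z) / w := by
      field_simp
    rw [h1]
    field_simp
    ring
  rw [hC]
  have hnormsq : Complex.normSq w = 1 := by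
    rw [Complex.normSq_eq_norm_sq, habs, one_pow]
  rw [Complex.div_re]
  rw [pk, Complex.sq_norm, ← hw]
  have hz2 : ‖z‖ ^ 2 = Complex.normSq z := (Complex.sq_norm z).symm ▸ rfl
  rw [Complex.sq_norm]
  rw [← add_div]
  congr 1
  simp only [Complex.add_re, Complex.add_im, Complex.sub_re, Complex.sub_im]
  have h3 : w.re ^ 2 + w.im ^ 2 = 1 := by
    have := hnormsq
    rw [Complex.normSq_apply] at this
    nlinarith [this]
  have h4 : Complex.normSq z = z.re ^ 2 + z.im ^ 2 := by
    rw [Complex.normSq_apply]; ring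
  rw [h4]
  nlinarith [h3]

lemma pk_mass {z : ℂ} (hz : ‖z‖ < 1) : ∫ θ, pk z θ ∂circleM = 1 := by
  have hcont : Continuous (fun θ : ℝ => (1 - z * Complex.exp (-(θ:ℂ) * Complex.I))⁻¹) := by
    apply Continuous.inv₀
    · fun_prop
    · exact fun θ => one_sub_ne hz θ
  have hint : IntegrableOn (fun θ : ℝ => (1 - z * Complex.exp (-(θ:ℂ) * Complex.I))⁻¹)
      (Set.Ioc 0 (2*π)) volume := hcont.integrableOn_Ioc
  have hintC : IntegrableOn (fun θ : ℝ => 2 * (1 - z * Complex.exp (-(θ:ℂ) * Complex.I))⁻¹ - 1)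
      (Set.Ioc 0 (2*π)) volume := by
    exact ((hint.const_mul 2).sub ((integrableOn_const_iff).mpr (Or.inr (by simp [Real.pi_pos, lt_top_iff_ne_top, ENNReal.mul_eq_top]))))
  have hIoc : ∫ θ in Set.Ioc (0:ℝ) (2*π), pk z θ = 2 * π := by
    have h1 : ∫ θ in Set.Ioc (0:ℝ) (2*π), pk z θ
        = ∫ θ in Set.Ioc (0:ℝ) (2*π),
            (2 * (1 - z * Complex.exp (-(θ:ℂ) * Complex.I))⁻¹ - 1).re := by
      apply setIntegral_congr_fun (measurableSet_Ioc)
      intro θ _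
      exact pk_re hz θ
    rw [h1]
    have h2 := _root_.integral_re (𝕜 := ℂ) hintC
    simp only [RCLike.re_to_complex] at h2
    rw [h2]
    rw [MeasureTheory.integral_sub (hint.const_mul 2)
      ((integrableOn_const_iff).mpr (Or.inr (by simp [Real.pi_pos, lt_top_iff_ne_top, ENNReal.mul_eq_top])))]
    rw [MeasureTheory.integral_const_mul, integral_inv_one_sub hz]
    rw [MeasureTheory.setIntegral_const]
    rw [Real.volume_real_Ioc]
    simp [Real.two_pi_pos.le]
    ring
  rw [circleM, MeasureTheory.integral_smul_measure, hIoc]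
  rw [ENNReal.toReal_inv, ENNReal.toReal_ofReal Real.two_pi_pos.le]
  simp [smul_eq_mul]
  field_simp


lemma poissonInt_add {z : ℂ} (hz : ‖z‖ < 1) {f g : ℝ → ℂ}
    (hf : Integrable f circleM) (hg : Integrable g circleM) :
    poissonInt (fun θ => f θ + g θ) z = poissonInt f z + poissonInt g z := by
  rw [poissonInt, poissonInt, poissonInt]
  simp_rw [mul_add]
  exact integral_add (integrable_pk_mul hz hf) (integrable_pk_mul hz hg)

lemma poissonInt_sub {z : ℂ} (hz : ‖z‖ < 1) {f g : ℝ → ℂ}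
    (hf : Integrable f circleM) (hg : Integrable g circleM) :
    poissonInt (fun θ => f θ - g θ) z = poissonInt f z - poissonInt g z := by
  rw [poissonInt, poissonInt, poissonInt]
  simp_rw [mul_sub]
  exact integral_sub (integrable_pk_mul hz hf) (integrable_pk_mul hz hg)

lemma phi_parallelogram {z : ℂ} (hz : ‖z‖ < 1) {f g : ℝ → ℂ}
    (hf : MemLp f 2 circleM) (hg : MemLp g 2 circleM) :
    Phi (fun θ => f θ + g θ) z + Phi (fun θ => f θ - g θ) z
      = 2 * Phi f z + 2 * Phi g z := by
  have iA : Integrable (fun θ => pk z θ * ‖f θ + g θ‖ ^ 2) circleM :=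
    integrable_pk_mulR hz (integrable_abs_sq (hf.add hg))
  have iB : Integrable (fun θ => pk z θ * ‖f θ - g θ‖ ^ 2) circleM :=
    integrable_pk_mulR hz (integrable_abs_sq (hf.sub hg))
  have iC : Integrable (fun θ => pk z θ * ‖f θ‖ ^ 2) circleM :=
    integrable_pk_mulR hz (integrable_abs_sq hf)
  have iD : Integrable (fun θ => pk z θ * ‖g θ‖ ^ 2) circleM :=
    integrable_pk_mulR hz (integrable_abs_sq hg)
  have claim1 : (∫ θ, pk z θ * ‖f θ + g θ‖ ^ 2 ∂circleM)
      + (∫ θ, pk z θ * ‖f θ - g θ‖ ^ 2 ∂circleM)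
      = 2 * (∫ θ, pk z θ * ‖f θ‖ ^ 2 ∂circleM)
      + 2 * (∫ θ, pk z θ * ‖g θ‖ ^ 2 ∂circleM) := by
    rw [← integral_add iA iB]
    have e1 : ∀ θ, pk z θ * ‖f θ + g θ‖ ^ 2
        + pk z θ * ‖f θ - g θ‖ ^ 2
        = 2 * (pk z θ * ‖f θ‖ ^ 2) + 2 * (pk z θ * ‖g θ‖ ^ 2) := by
      intro θ
      simp only [Complex.sq_norm, Complex.normSq_apply, Complex.add_re, Complex.add_im,
        Complex.sub_re, Complex.sub_im]
      ring
    simp_rw [e1]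
    rw [integral_add (iC.const_mul 2) (iD.const_mul 2)]
    rw [integral_const_mul, integral_const_mul]
  have hPadd := poissonInt_add hz (integrable_of_L2 hf) (integrable_of_L2 hg)
  have hPsub := poissonInt_sub hz (integrable_of_L2 hf) (integrable_of_L2 hg)
  have claim2 : ‖poissonInt (fun θ => f θ + g θ) z‖ ^ 2
      + ‖poissonInt (fun θ => f θ - g θ) z‖ ^ 2
      = 2 * ‖poissonInt f z‖ ^ 2 + 2 * ‖poissonInt g z‖ ^ 2 := by
    rw [hPadd, hPsub]
    simp only [Complex.sq_norm, Complex.normSq_apply, Complex.add_re, Complex.add_im,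
      Complex.sub_re, Complex.sub_im]
    ring
  rw [Phi, Phi, Phi, Phi]
  linarith [claim1, claim2]

lemma phi_eq_variance {z : ℂ} (hz : ‖z‖ < 1) {g : ℝ → ℂ}
    (hg : MemLp g 2 circleM) :
    Phi g z = ∫ θ, pk z θ * ‖g θ - poissonInt g z‖ ^ 2 ∂circleM := by
  set c := poissonInt g z with hc
  have hgi : Integrable g circleM := integrable_of_L2 hg
  have i1 : Integrable (fun θ => pk z θ * ‖g θ‖ ^ 2) circleM :=
    integrable_pk_mulR hz (integrable_abs_sq hg)
  have i2 : Integrable (fun θ => pk z θ * ((starRingEnd ℂ) c * g θ).re) circleM :=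
    integrable_pk_mulR hz (hgi.const_mul _).re
  have i3 : Integrable (fun θ => ‖c‖ ^ 2 * pk z θ) circleM := by
    simpa [mul_comm] using (integrable_pk_mulR hz (integrable_const (‖c‖ ^ 2)))
  have e1 : ∀ θ, pk z θ * ‖g θ - c‖ ^ 2
      = pk z θ * ‖g θ‖ ^ 2 - 2 * (pk z θ * ((starRingEnd ℂ) c * g θ).re)
        + ‖c‖ ^ 2 * pk z θ := by
    intro θ
    simp only [Complex.sq_norm, Complex.normSq_apply, Complex.sub_re, Complex.sub_im,
      Complex.mul_re, Complex.conj_re, Complex.conj_im]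
    ring
  have i12 : Integrable (fun θ => pk z θ * ‖g θ‖ ^ 2
      - 2 * (pk z θ * ((starRingEnd ℂ) c * g θ).re)) circleM := i1.sub (i2.const_mul 2)
  simp_rw [e1]
  rw [integral_add i12 i3, integral_sub i1 (i2.const_mul 2),
    integral_const_mul, integral_const_mul, pk_mass hz, mul_one]
  have key : ∫ θ, pk z θ * ((starRingEnd ℂ) c * g θ).re ∂circleM = ‖c‖ ^ 2 := by
    have e2 : ∀ θ, pk z θ * ((starRingEnd ℂ) c * g θ).re
        = (((pk z θ : ℂ)) * ((starRingEnd ℂ) c * g θ)).re := by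
      intro θ
      rw [Complex.re_ofReal_mul]
    simp_rw [e2]
    have hint : Integrable (fun θ => ((pk z θ : ℂ)) * ((starRingEnd ℂ) c * g θ)) circleM :=
      integrable_pk_mul hz (hgi.const_mul _)
    have h3 := _root_.integral_re (𝕜 := ℂ) hint
    simp only [RCLike.re_to_complex] at h3
    rw [h3]
    have e3 : ∀ θ, ((pk z θ : ℂ)) * ((starRingEnd ℂ) c * g θ)
        = (starRingEnd ℂ) c * ((pk z θ : ℂ) * g θ) := fun θ => by ring
    simp_rw [e3]
    rw [integral_const_mul, ← poissonInt, ← hc]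
    rw [mul_comm, Complex.mul_conj]
    simp [Complex.sq_norm]
  rw [key, Phi, ← hc]
  ring

/-- Every norm-attaining BMO function of Garsia norm one is an
extreme point of the unit ball of BMO (modulo constants). -/
theorem bmo_na_extreme_point (f : ℝ → ℂ) (hf : MemLp f 2 circleM)
    (hna : ∃ z₀ ∈ unitDisk,
      ENNReal.ofReal (Real.sqrt (Phi f z₀)) = garsiaNorm f)
    (hG : garsiaNorm f = 1)
    (g : ℝ → ℂ) (hg : MemLp g 2 circleM) (hgbmo : garsiaNorm g < ⊤)
    (hplus : garsiaNorm (fun θ => f θ + g θ) ≤ 1)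
    (hminus : garsiaNorm (fun θ => f θ - g θ) ≤ 1) :
    ∃ c : ℂ, ∀ᵐ θ ∂circleM, g θ = c := by
  obtain ⟨z₀, hz₀u, hattain⟩ := hna
  have hz₀ : ‖z₀‖ < 1 := by
    simpa [unitDisk, Metric.mem_ball, Complex.dist_eq] using hz₀u
  have hPhif : Phi f z₀ = 1 := by
    rw [hG, ENNReal.ofReal_eq_one] at hattain
    exact Real.sqrt_eq_one.mp hattain
  have hle_of : ∀ F : ℝ → ℂ, garsiaNorm F ≤ 1 → Phi F z₀ ≤ 1 := by
    intro F hF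
    have h1 : ENNReal.ofReal (Real.sqrt (Phi F z₀)) ≤ 1 := by
      refine le_trans ?_ hF
      exact le_iSup (fun z : unitDisk => ENNReal.ofReal (Real.sqrt (Phi F (z : ℂ)))) ⟨z₀, hz₀u⟩
    rw [ENNReal.ofReal_le_one] at h1
    by_contra h
    push_neg at h
    have h2 : (1:ℝ) < Real.sqrt (Phi F z₀) := by
      rw [show (1:ℝ) = Real.sqrt 1 from (Real.sqrt_one).symm]
      exact Real.sqrt_lt_sqrt zero_le_one h
    linarith
  have hplus' : Phi (fun θ => f θ + g θ) z₀ ≤ 1 := hle_of _ hplus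
  have hminus' : Phi (fun θ => f θ - g θ) z₀ ≤ 1 := hle_of _ hminus
  have hpar := phi_parallelogram hz₀ hf hg
  have hPhig : Phi g z₀ ≤ 0 := by linarith
  set c := poissonInt g z₀ with hc
  have hvar := phi_eq_variance hz₀ hg
  have hint : Integrable (fun θ => pk z₀ θ * ‖g θ - c‖ ^ 2) circleM :=
    integrable_pk_mulR hz₀ (integrable_abs_sq (hg.sub (memLp_const c)))
  have hnonneg : ∀ θ, 0 ≤ pk z₀ θ * ‖g θ - c‖ ^ 2 := fun θ =>
    mul_nonneg (pk_pos hz₀ θ).le (sq_nonneg _)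
  have h0 : ∫ θ, pk z₀ θ * ‖g θ - c‖ ^ 2 ∂circleM = 0 := by
    refine le_antisymm ?_ (integral_nonneg hnonneg)
    rw [← hvar]; exact hPhig
  have hae := (integral_eq_zero_iff_of_nonneg hnonneg hint).mp h0
  refine ⟨c, ?_⟩
  filter_upwards [hae] with θ hθ
  have hθ' : pk z₀ θ * ‖g θ - c‖ ^ 2 = 0 := hθ
  have h1 : ‖g θ - c‖ ^ 2 = 0 := by
    rcases mul_eq_zero.mp hθ' with h | h
    · exact absurd h (pk_pos hz₀ θ).ne'
    · exact h
  have h2 : g θ - c = 0 := by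
    have := pow_eq_zero_iff (n := 2) (by norm_num) |>.mp h1
    exact norm_eq_zero.mp this
  exact sub_eq_zero.mp h2
end
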